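/- arXiv:1806.03108 — 5 statements merged into one kernel-verified Lean document; each statement's English description precedes it below -/
import Mathlib

section
/- Fix n ≥ 1 and let S = {1,…,n} × {1,…,n}. Let (X_m)_{m∈ℕ} be an adapted S-valued process such that for every m and almost every ω, writing X_m(ω) = (i, j), every state s' = (i', j') ∈ S with |i − i'| ≤ 1 and |j − j'| ≤ 1 satisfies μ[X_{m+1} = s' | ℱ_m](ω) ≥ 1/36. Then for every state s ∈ S, almost surely X_m = s for infinitely many m. -/
/-!
Write `d(x, y)` for the Chebyshev distance on the grid. If `X` is a.s. within distance `d + 1`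
of a target `s` infinitely often, then each such time `k` allows a single move to a state
within distance `d` of `s`, so `X (k + 1)` is within distance `d` of `s` with conditional
probability at least `1/36`. These conditional probabilities thus have a divergent sum, and
Lévy's conditional Borel–Cantelli lemma shows that `X` is a.s. within distance `d` of `s`
infinitely often. Descending from the trivial case `d = n - 1` to `d = 0` proves the theorem.
-/

open MeasureTheory Filter

theorem tendsto_sum_range_atTop_of_frequently_le {f : ℕ → ℝ} (hf : ∀ k, 0 ≤ f k) {ε : ℝ}
    (hε : 0 < ε) (h : ∃ᶠ k in atTop, ε ≤ f k) :
    Tendsto (fun N => ∑ k ∈ Finset.range N, f k) atTop atTop := by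
  refine (not_summable_iff_tendsto_nat_atTop_of_nonneg hf).1 fun hsum => ?_
  exact h ((hsum.tendsto_atTop_zero.eventually (gt_mem_nhds hε)).mono fun _ hk => not_le.2 hk)

section ConditionalBorelCantelli

variable {Ω : Type*} {m : MeasurableSpace Ω} {μ : Measure Ω}

theorem condExp_indicator_one_mono [IsFiniteMeasure μ] {m' : MeasurableSpace Ω} {s t : Set Ω}
    (hs : MeasurableSet[m] s) (ht : MeasurableSet[m] t) (hst : s ⊆ t) :
    μ[s.indicator (fun _ => (1 : ℝ)) | m'] ≤ᵐ[μ] μ[t.indicator (fun _ => (1 : ℝ)) | m'] :=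
  condExp_mono ((integrable_const 1).indicator hs) ((integrable_const 1).indicator ht)
    (.of_forall (Set.indicator_le_indicator_of_subset hst fun _ => zero_le_one))

theorem ae_frequently_mem_of_condExp_indicator_ge [IsFiniteMeasure μ] {ℱ : Filtration ℕ m}
    {A : ℕ → Set Ω} (hA : ∀ k, MeasurableSet[ℱ k] (A k)) {P : ℕ → Ω → Prop} {ε : ℝ}
    (hε : 0 < ε) (hP : ∀ᵐ ω ∂μ, ∃ᶠ k in atTop, P k ω)
    (hbound : ∀ᵐ ω ∂μ, ∀ k, P k ω → ε ≤ μ[(A (k + 1)).indicator (fun _ => (1 : ℝ)) | ℱ k] ω) :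
    ∀ᵐ ω ∂μ, ∃ᶠ k in atTop, ω ∈ A k := by
  have hnonneg : ∀ᵐ ω ∂μ, ∀ k, 0 ≤ μ[(A (k + 1)).indicator (fun _ => (1 : ℝ)) | ℱ k] ω :=
    ae_all_iff.2 fun _ => condExp_nonneg (.of_forall (Set.indicator_nonneg fun _ _ => zero_le_one))
  filter_upwards [ae_mem_limsup_atTop_iff μ hA, hP, hbound, hnonneg] with ω hlimsup hfreq hb hnn
  rw [← mem_limsup_iff_frequently_mem]
  exact hlimsup.2 (tendsto_sum_range_atTop_of_frequently_le hnn hε (hfreq.mono hb))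

end ConditionalBorelCantelli

section Grid

variable {n : ℕ}

def WithinDist (d : ℕ) (x y : Fin n × Fin n) : Prop :=
  |(x.1.val : ℤ) - y.1.val| ≤ d ∧ |(x.2.val : ℤ) - y.2.val| ≤ d

theorem Fin.exists_step_toward {d : ℕ} {a t : Fin n} (h : |(a.val : ℤ) - t.val| ≤ d + 1) :
    ∃ a' : Fin n, |(a.val : ℤ) - a'.val| ≤ 1 ∧ |(a'.val : ℤ) - t.val| ≤ d := by
  rw [abs_le] at h
  rcases lt_trichotomy a.val t.val with hlt | heq | hgt
  · exact ⟨⟨a.val + 1, by omega⟩, by simp, by simp only [abs_le]; omega⟩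
  · exact ⟨a, by simp, by simp only [abs_le]; omega⟩
  · exact ⟨⟨a.val - 1, by omega⟩, by simp only [abs_le]; omega, by simp only [abs_le]; omega⟩

theorem WithinDist.exists_step {d : ℕ} {x t : Fin n × Fin n} (h : WithinDist (d + 1) x t) :
    ∃ x', WithinDist 1 x x' ∧ WithinDist d x' t := by
  obtain ⟨a, ha₁, ha⟩ := Fin.exists_step_toward (by exact_mod_cast h.1)
  obtain ⟨b, hb₁, hb⟩ := Fin.exists_step_toward (by exact_mod_cast h.2)
  exact ⟨(a, b), ⟨by exact_mod_cast ha₁, by exact_mod_cast hb₁⟩, ha, hb⟩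

theorem withinDist_sub_one (x y : Fin n × Fin n) : WithinDist (n - 1) x y := by
  have := x.1.isLt; have := x.2.isLt; have := y.1.isLt; have := y.2.isLt
  constructor <;> rw [abs_le] <;> omega

theorem withinDist_zero_iff {x y : Fin n × Fin n} : WithinDist 0 x y ↔ x = y := by
  simp only [WithinDist, Nat.cast_zero, abs_nonpos_iff, sub_eq_zero, Nat.cast_inj,
    Fin.val_inj, Prod.ext_iff]

end Grid

section GridChain

variable {Ω : Type*} {m : MeasurableSpace Ω} {μ : Measure Ω} [IsFiniteMeasure μ]
  {ℱ : Filtration ℕ m} {n : ℕ} {X : ℕ → Ω → Fin n × Fin n}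

theorem ae_frequently_withinDist_of_succ (hadapted : ∀ k, Measurable[ℱ k] (X k))
    (hstep : ∀ k : ℕ, ∀ᵐ ω ∂μ, ∀ s' : Fin n × Fin n,
      |((X k ω).1.val : ℤ) - (s'.1.val : ℤ)| ≤ 1 →
      |((X k ω).2.val : ℤ) - (s'.2.val : ℤ)| ≤ 1 →
      (1 / 36 : ℝ) ≤ (μ[{ω' | X (k + 1) ω' = s'}.indicator (fun _ => (1 : ℝ)) | ℱ k]) ω)
    (s : Fin n × Fin n) {d : ℕ}
    (h : ∀ᵐ ω ∂μ, ∃ᶠ k in atTop, WithinDist (d + 1) (X k ω) s) :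
    ∀ᵐ ω ∂μ, ∃ᶠ k in atTop, WithinDist d (X k ω) s := by
  set A : ℕ → Set Ω := fun k => X k ⁻¹' {x | WithinDist d x s}
  have hA (k : ℕ) : MeasurableSet[ℱ k] (A k) := hadapted k (Set.toFinite _).measurableSet
  have hmono : ∀ᵐ ω ∂μ, ∀ k x, WithinDist d x s →
      μ[{ω' | X (k + 1) ω' = x}.indicator (fun _ => (1 : ℝ)) | ℱ k] ω ≤
        μ[(A (k + 1)).indicator (fun _ => (1 : ℝ)) | ℱ k] ω := by
    refine ae_all_iff.2 fun k => ae_all_iff.2 fun x => ?_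
    by_cases hx : WithinDist d x s
    · have hsub : {ω' | X (k + 1) ω' = x} ⊆ A (k + 1) := fun ω' (hω' : X (k + 1) ω' = x) => by
        simpa [A, hω'] using hx
      exact (condExp_indicator_one_mono
        (ℱ.le _ _ (hadapted (k + 1) (measurableSet_singleton x)))
        (ℱ.le _ _ (hA (k + 1))) hsub).mono fun _ hle _ => hle
    · exact .of_forall fun _ hx' => absurd hx' hx
  refine ae_frequently_mem_of_condExp_indicator_ge hA (by norm_num : (0 : ℝ) < 1 / 36) h ?_
  filter_upwards [ae_all_iff.2 hstep, hmono] with ω hstepω hmonoω k hk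
  obtain ⟨x, hx₁, hx⟩ := hk.exists_step
  exact (hstepω k x (by exact_mod_cast hx₁.1) (by exact_mod_cast hx₁.2)).trans (hmonoω k x hx)

end GridChain

theorem stmt3_general {Ω : Type*} {m : MeasurableSpace Ω} (μ : Measure Ω) [IsProbabilityMeasure μ]
    (ℱ : Filtration ℕ m) (n : ℕ)
    (X : ℕ → Ω → Fin n × Fin n)
    (hadapted : ∀ k : ℕ, Measurable[ℱ k] (X k))
    (hstep : ∀ k : ℕ, ∀ᵐ ω ∂μ, ∀ s' : Fin n × Fin n,
      |((X k ω).1.val : ℤ) - (s'.1.val : ℤ)| ≤ 1 →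
      |((X k ω).2.val : ℤ) - (s'.2.val : ℤ)| ≤ 1 →
      (1 / 36 : ℝ) ≤ (μ[{ω' | X (k + 1) ω' = s'}.indicator (fun _ => (1 : ℝ)) | ℱ k]) ω) :
    ∀ s : Fin n × Fin n, ∀ᵐ ω ∂μ, ∃ᶠ k in atTop, X k ω = s := by
  intro s
  have hclose : ∀ᵐ ω ∂μ, ∃ᶠ k in atTop, WithinDist 0 (X k ω) s :=
    Nat.decreasingInduction (motive := fun d _ => ∀ᵐ ω ∂μ, ∃ᶠ k in atTop, WithinDist d (X k ω) s)
      (fun _ _ => ae_frequently_withinDist_of_succ hadapted hstep s)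
      (.of_forall fun _ => .of_forall fun _ => withinDist_sub_one _ _) (Nat.zero_le (n - 1))
  filter_upwards [hclose] with ω hω
  exact hω.mono fun _ => withinDist_zero_iff.1

/-- Ergodicity of the block-withholding pool-attack game: on the state space
`{1,…,n} × {1,…,n}` (modelled as `Fin n × Fin n`), if from any state each state whose
two coordinates differ by at most one is reached with conditional probability at least
`1/36`, then every state is visited infinitely often almost surely. -/
theorem stmt3 {Ω : Type*} {m : MeasurableSpace Ω} (μ : Measure Ω) [IsProbabilityMeasure μ]
    (ℱ : Filtration ℕ m) (n : ℕ) (hn : 1 ≤ n)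
    (X : ℕ → Ω → Fin n × Fin n)
    (hadapted : ∀ k : ℕ, Measurable[ℱ k] (X k))
    (hstep : ∀ k : ℕ, ∀ᵐ ω ∂μ, ∀ s' : Fin n × Fin n,
      |((X k ω).1.val : ℤ) - (s'.1.val : ℤ)| ≤ 1 →
      |((X k ω).2.val : ℤ) - (s'.2.val : ℤ)| ≤ 1 →
      (1 / 36 : ℝ) ≤ (μ[{ω' | X (k + 1) ω' = s'}.indicator (fun _ => (1 : ℝ)) | ℱ k]) ω) :
    ∀ s : Fin n × Fin n, ∀ᵐ ω ∂μ, ∃ᶠ k in atTop, X k ω = s :=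
  stmt3_general μ ℱ n X hadapted hstep
end

section
/- Let α, β, α', β' be real numbers with α + β' > 0, β + α' > 0 and α'·β' < (α + β')·(β + α'), and set D = (α + β')·(β + α') − α'·β'. Then the unique pair (r_A, r_B) satisfying r_A = (α − α') + α'·(r_B/(β + α')) and r_B = (β − β') + β'·(r_A/(α + β')) is given explicitly by r_A = ((α − α')·(β + α') + α'·(β − β'))·(α + β')/D and r_B = ((β − β')·(α + β') + β'·(α − α'))·(β + α')/D. -/
/-! After substituting `p = α'/(β + α')` and `q = β'/(α + β')` the revenue equations form the
linear system `x = a + p y`, `y = b + q x`, whose determinant `1 - p q = D / ((α + β')(β + α'))`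
is nonzero; solving it and clearing the denominators gives the stated formulas. -/

theorem eq_add_mul_and_eq_add_mul_iff {K : Type*} [Field K] {a b p q x y : K}
    (h : 1 - p * q ≠ 0) :
    (x = a + p * y ∧ y = b + q * x) ↔
      (x = (a + p * b) / (1 - p * q) ∧ y = (b + q * a) / (1 - p * q)) := by
  simp only [eq_div_iff h]
  constructor
  · rintro ⟨hx, hy⟩
    exact ⟨by linear_combination hx + p * hy, by linear_combination hy + q * hx⟩
  · rintro ⟨hx, hy⟩
    refine ⟨mul_right_cancel₀ h ?_, mul_right_cancel₀ h ?_⟩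
    · linear_combination hx - p * hy
    · linear_combination hy - q * hx

theorem eq_add_mul_div_and_eq_add_mul_div_iff {K : Type*} [Field K] {a b p q s t : K} (x y : K)
    (hs : s ≠ 0) (ht : t ≠ 0) (h : p * q ≠ t * s) :
    (x = a + p * (y / s) ∧ y = b + q * (x / t)) ↔
      (x = (a * s + p * b) * t / (t * s - p * q) ∧
        y = (b * t + q * a) * s / (t * s - p * q)) := by
  have hD : t * s - p * q ≠ 0 := sub_ne_zero.mpr h.symm
  have hpq : 1 - p / s * (q / t) ≠ 0 := by
    rw [div_mul_div_comm, one_sub_div (mul_ne_zero hs ht)]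
    exact div_ne_zero (by rwa [mul_comm s]) (mul_ne_zero hs ht)
  have hsolution :
      (a * s + p * b) * t / (t * s - p * q) = (a + p / s * b) / (1 - p / s * (q / t)) ∧
      (b * t + q * a) * s / (t * s - p * q) = (b + q / t * a) / (1 - p / s * (q / t)) := by
    constructor <;> field_simp
  rw [hsolution.1, hsolution.2, ← eq_add_mul_and_eq_add_mul_iff hpq]
  simp only [mul_div_assoc', div_mul_eq_mul_div]

/-- Explicit formula for the unique pair of revenues `(r_A, r_B)` in the
block-withholding attack model. -/
theorem stmt5 (α β α' β' : ℝ) (h1 : 0 < α + β') (h2 : 0 < β + α')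
    (h3 : α' * β' < (α + β') * (β + α')) :
    letI D : ℝ := (α + β') * (β + α') - α' * β'
    letI rA : ℝ := ((α - α') * (β + α') + α' * (β - β')) * (α + β') / D
    letI rB : ℝ := ((β - β') * (α + β') + β' * (α - α')) * (β + α') / D
    (rA = (α - α') + α' * (rB / (β + α')) ∧
      rB = (β - β') + β' * (rA / (α + β'))) ∧
    ∀ x y : ℝ,
      x = (α - α') + α' * (y / (β + α')) →
      y = (β - β') + β' * (x / (α + β')) →
      x = rA ∧ y = rB := by
  have hsystem x y := eq_add_mul_div_and_eq_add_mul_div_iff (a := α - α') (b := β - β') x y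
    h2.ne' h1.ne' h3.ne
  exact ⟨(hsystem _ _).mpr ⟨rfl, rfl⟩, fun x y hx hy => (hsystem x y).mp ⟨hx, hy⟩⟩
end

section
/- Let α, β, α' be real numbers with 0 < α, 0 < β and 0 < α' < α, and set β' = 0 (pool A infiltrates pool B, and B does not retaliate). Then the unique pair (r_A, r_B) satisfying r_A = (α − α') + α'·(r_B/(β + α')) and r_B = (β − β') + β'·(r_A/(α + β')) is r_B = β and r_A = (α − α') + α'·β/(β + α'), and it satisfies r_A/α > r_B/(β + α') and r_B/(β + α') < 1; that is, the attacking pool A is strictly more attractive than the victim pool B, and the victim pool's attractiveness is strictly less than 1. -/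
/-!
Without retaliation (`β' = 0`) pool `B` keeps its own power's worth of revenue, `r_B = β`, and
the system becomes explicit. Pool `A` then earns `(α - α') + α' β / (β + α')`, and
`r_A / α - r_B / (β + α') = α' (α - α') / (α (β + α'))`, which is positive exactly because
`0 < α' < α`.
-/

lemma revenue_system_unilateral_iff (α β α' rA rB : ℝ) :
    (rA = (α - α') + α' * (rB / (β + α')) ∧ rB = (β - 0) + 0 * (rA / (α + 0))) ↔
      rB = β ∧ rA = (α - α') + α' * β / (β + α') := by
  constructor
  · rintro ⟨hA, hB⟩
    rw [zero_mul, add_zero, sub_zero] at hB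
    subst hB
    exact ⟨rfl, by rw [hA, mul_div_assoc]⟩
  · rintro ⟨rfl, rfl⟩
    exact ⟨by rw [mul_div_assoc], by ring⟩

lemma victim_attractiveness_lt_one {β α' : ℝ} (hβ : 0 < β) (hα' : 0 < α') :
    β / (β + α') < 1 :=
  (div_lt_one (by positivity)).2 (lt_add_of_pos_right β hα')

lemma victim_attractiveness_lt_attacker {α β α' : ℝ} (hβ : 0 < β) (hα'0 : 0 < α')
    (hα' : α' < α) :
    β / (β + α') < ((α - α') + α' * β / (β + α')) / α := by
  have hα : 0 < α := hα'0.trans hα'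
  have hβα' : 0 < β + α' := by positivity
  have gap : ((α - α') + α' * β / (β + α')) / α - β / (β + α') =
      α' * (α - α') / (α * (β + α')) := by
    field_simp
    ring
  have : 0 < α' * (α - α') / (α * (β + α')) :=
    div_pos (mul_pos hα'0 (sub_pos.2 hα')) (mul_pos hα hβα')
  linarith

theorem stmt7_general (α β α' β' : ℝ) (hβ : 0 < β)
    (hα'0 : 0 < α') (hα' : α' < α) (hβ' : β' = 0) :
    (∃! p : ℝ × ℝ,
      p.1 = (α - α') + α' * (p.2 / (β + α')) ∧
      p.2 = (β - β') + β' * (p.1 / (α + β'))) ∧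
    ∀ rA rB : ℝ,
      rA = (α - α') + α' * (rB / (β + α')) →
      rB = (β - β') + β' * (rA / (α + β')) →
      rB = β ∧ rA = (α - α') + α' * β / (β + α') ∧
        rB / (β + α') < rA / α ∧ rB / (β + α') < 1 := by
  subst hβ'
  refine ⟨⟨((α - α') + α' * β / (β + α'), β),
    (revenue_system_unilateral_iff ..).2 ⟨rfl, rfl⟩, fun p hp => ?_⟩, ?_⟩
  · obtain ⟨hB, hA⟩ := (revenue_system_unilateral_iff ..).1 hp
    exact Prod.ext hA hB
  · intro rA rB hA hB
    obtain ⟨rfl, rfl⟩ := (revenue_system_unilateral_iff ..).1 ⟨hA, hB⟩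
    exact ⟨rfl, rfl, victim_attractiveness_lt_attacker hβ hα'0 hα',
      victim_attractiveness_lt_one hβ hα'0⟩

/-- Unilateral block-withholding attack (`β' = 0`): the unique solution of the revenue
system is `r_B = β` and `r_A = (α − α') + α'·β/(β + α')`, the attacking pool `A` is
strictly more attractive than the victim pool `B`, and the victim's attractiveness is
strictly less than 1. -/
theorem stmt7 (α β α' β' : ℝ) (hα : 0 < α) (hβ : 0 < β)
    (hα'0 : 0 < α') (hα' : α' < α) (hβ' : β' = 0) :
    (∃! p : ℝ × ℝ,
      p.1 = (α - α') + α' * (p.2 / (β + α')) ∧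
      p.2 = (β - β') + β' * (p.1 / (α + β'))) ∧
    ∀ rA rB : ℝ,
      rA = (α - α') + α' * (rB / (β + α')) →
      rB = (β - β') + β' * (rA / (α + β')) →
      rB = β ∧ rA = (α - α') + α' * β / (β + α') ∧
        rB / (β + α') < rA / α ∧ rB / (β + α') < 1 :=
  stmt7_general α β α' β' hβ hα'0 hα' hβ'
end

section
/- Let S be a finite nonempty set, P an irreducible row-stochastic matrix on S, r : S → ℝ a reward function, and t ∈ S a distinguished state. Then there exists a unique pair (g, v) with g ∈ ℝ and v : S → ℝ such that v(t) = 0 and, for every s ∈ S, g + v(s) = r(s) + Σ_{s' ∈ S} P(s, s')·v(s'). -/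
/-!
The system is the linear equation `L (g, v) = (0, r)` for the endomorphism
`L (g, v) = (v t, g + v - P v)` of the finite-dimensional space `ℝ × ℝ^S`, so it suffices that `L`
is injective. If `g + v = P v`, evaluating at a maximum and at a minimum of `v` gives `g ≤ 0 ≤ g`,
so `v` is `P`-harmonic. A harmonic vector is harmonic for every power `P ^ k`, and a row of `P ^ k`
is a probability vector, so a maximum of `v` propagates along every positive entry of `P ^ k`;
by irreducibility `v` is constant, hence zero since `v t = 0`.
-/

open Finset

namespace Matrix

variable {n : Type*} [Fintype n] {P : Matrix n n ℝ} {v : n → ℝ}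

noncomputable def gainBiasMap (P : Matrix n n ℝ) (t : n) : ℝ × (n → ℝ) →ₗ[ℝ] ℝ × (n → ℝ) where
  toFun p := (p.2 t, fun i => p.1 + p.2 i - (P *ᵥ p.2) i)
  map_add' p q := by
    ext i
    · rfl
    · simp only [Prod.snd_add, Prod.fst_add, Pi.add_apply, mulVec_add]
      ring
  map_smul' c p := by
    ext i
    · rfl
    · simp only [Prod.smul_snd, Prod.smul_fst, Pi.smul_apply, mulVec_smul, smul_eq_mul,
        RingHom.id_apply]
      ring

lemma gainBiasMap_eq_iff {t : n} {r : n → ℝ} {p : ℝ × (n → ℝ)} :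
    gainBiasMap P t p = (0, r) ↔ p.2 t = 0 ∧ ∀ i, p.1 + p.2 i = r i + (P *ᵥ p.2) i := by
  simp only [gainBiasMap, LinearMap.coe_mk, AddHom.coe_mk, Prod.mk.injEq, funext_iff,
    sub_eq_iff_eq_add]

variable [DecidableEq n]

lemma mulVec_apply_le_of_mem_rowStochastic (hP : P ∈ rowStochastic ℝ n) {c : ℝ}
    (hv : ∀ j, v j ≤ c) (i : n) : (P *ᵥ v) i ≤ c :=
  calc (P *ᵥ v) i = ∑ j, P i j * v j := rfl
    _ ≤ ∑ j, P i j * c := sum_le_sum fun j _ => mul_le_mul_of_nonneg_left (hv j) (hP.1 i j)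
    _ = c := by rw [← sum_mul, sum_row_of_mem_rowStochastic hP, one_mul]

lemma nonpos_of_add_eq_mulVec [Nonempty n] (hP : P ∈ rowStochastic ℝ n) {g : ℝ}
    (hgv : ∀ i, g + v i = (P *ᵥ v) i) : g ≤ 0 := by
  obtain ⟨m, hm⟩ := Finite.exists_max v
  linarith [hgv m, mulVec_apply_le_of_mem_rowStochastic hP hm m]

lemma eq_zero_of_add_eq_mulVec [Nonempty n] (hP : P ∈ rowStochastic ℝ n) {g : ℝ}
    (hgv : ∀ i, g + v i = (P *ᵥ v) i) : g = 0 := by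
  refine le_antisymm (nonpos_of_add_eq_mulVec hP hgv) ?_
  have hneg : ∀ i, -g + (-v) i = (P *ᵥ -v) i := fun i => by
    rw [mulVec_neg, Pi.neg_apply, Pi.neg_apply, ← hgv i, neg_add]
  linarith [nonpos_of_add_eq_mulVec hP hneg]

lemma pow_mulVec_eq_self (hv : P *ᵥ v = v) (k : ℕ) : (P ^ k) *ᵥ v = v := by
  induction k with
  | zero => exact one_mulVec v
  | succ k ih => rw [pow_succ, ← mulVec_mulVec, hv, ih]

lemma apply_eq_of_isMax_of_mulVec_eq_self (hP : P ∈ rowStochastic ℝ n) (hv : P *ᵥ v = v)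
    {i j : n} (hi : ∀ k, v k ≤ v i) (hij : 0 < P i j) : v j = v i := by
  have hsum : ∑ k, P i k * (v i - v k) = 0 := by
    simp only [mul_sub, sum_sub_distrib, ← sum_mul, sum_row_of_mem_rowStochastic hP, one_mul]
    exact sub_eq_zero.2 (congrFun hv i).symm
  have hterm := (sum_eq_zero_iff_of_nonneg fun k _ =>
    mul_nonneg (hP.1 i k) (sub_nonneg.2 (hi k))).1 hsum j (mem_univ j)
  rcases mul_eq_zero.1 hterm with h | h
  · exact absurd h hij.ne'
  · linarith

lemma IsIrreducible.eq_of_mulVec_eq_self (hirr : P.IsIrreducible) (hP : P ∈ rowStochastic ℝ n)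
    (hv : P *ᵥ v = v) (i j : n) : v i = v j := by
  have : Nonempty n := ⟨i⟩
  obtain ⟨m, hm⟩ := Finite.exists_max v
  have hconst : ∀ j, v j = v m := fun j => by
    obtain ⟨k, -, hk⟩ := (isIrreducible_iff_exists_pow_pos hirr.nonneg).1 hirr m j
    exact apply_eq_of_isMax_of_mulVec_eq_self (pow_mem hP k) (pow_mulVec_eq_self hv k) hm hk
  rw [hconst i, hconst j]

lemma gainBiasMap_injective (hirr : P.IsIrreducible) (hP : P ∈ rowStochastic ℝ n)
    (t : n) : Function.Injective (gainBiasMap P t) := by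
  have : Nonempty n := ⟨t⟩
  rw [← LinearMap.ker_eq_bot, LinearMap.ker_eq_bot']
  rintro ⟨g, v⟩ h
  have hvt : v t = 0 := congrArg Prod.fst h
  have hgv : ∀ i, g + v i = (P *ᵥ v) i := fun i =>
    sub_eq_zero.1 (congrFun (congrArg Prod.snd h) i)
  have hg : g = 0 := eq_zero_of_add_eq_mulVec hP hgv
  have hv : P *ᵥ v = v := funext fun i => by rw [← hgv i, hg, zero_add]
  have hv0 : v = 0 := funext fun i => (hirr.eq_of_mulVec_eq_self hP hv i t).trans hvt
  rw [hg, hv0]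
  rfl

end Matrix

theorem stmt8_general {S : Type*} [Fintype S] [DecidableEq S]
    (P : Matrix S S ℝ)
    (hnonneg : ∀ s s' : S, 0 ≤ P s s')
    (hrow : ∀ s : S, ∑ s' : S, P s s' = 1)
    (hirr : ∀ s s' : S, ∃ k : ℕ, 1 ≤ k ∧ 0 < (P ^ k) s s')
    (r : S → ℝ) (t : S) :
    ∃! p : ℝ × (S → ℝ),
      p.2 t = 0 ∧ ∀ s : S, p.1 + p.2 s = r s + ∑ s' : S, P s s' * p.2 s' := by
  have hP : P ∈ Matrix.rowStochastic ℝ S := Matrix.mem_rowStochastic_iff_sum.2 ⟨hnonneg, hrow⟩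
  have hP_irr : P.IsIrreducible := (Matrix.isIrreducible_iff_exists_pow_pos hnonneg).2 hirr
  have hinj := Matrix.gainBiasMap_injective hP_irr hP t
  have hbij : Function.Bijective (Matrix.gainBiasMap P t) :=
    ⟨hinj, LinearMap.injective_iff_surjective.1 hinj⟩
  exact (existsUnique_congr fun p => Matrix.gainBiasMap_eq_iff).1 (hbij.existsUnique (0, r))

/-- For an irreducible row-stochastic matrix `P` on a finite nonempty state space `S`,
a reward function `r` and a distinguished state `t`, there is a unique pair `(g, v)`
with `v t = 0` solving the gain/bias system `g + v s = r s + Σ_{s'} P s s' · v s'`. -/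
theorem stmt8 {S : Type*} [Fintype S] [Nonempty S] [DecidableEq S]
    (P : Matrix S S ℝ)
    (hnonneg : ∀ s s' : S, 0 ≤ P s s')
    (hrow : ∀ s : S, ∑ s' : S, P s s' = 1)
    (hirr : ∀ s s' : S, ∃ k : ℕ, 1 ≤ k ∧ 0 < (P ^ k) s s')
    (r : S → ℝ) (t : S) :
    ∃! p : ℝ × (S → ℝ),
      p.2 t = 0 ∧ ∀ s : S, p.1 + p.2 s = r s + ∑ s' : S, P s s' * p.2 s' :=
  stmt8_general P hnonneg hrow hirr r t
end

section
/- Let S and A be finite nonempty sets, δ : S × A × S → ℝ a transition function with δ(s, a, s') ≥ 0 and Σ_{s'} δ(s, a, s') = 1 for all s ∈ S, a ∈ A, and r : S × A → ℝ a reward function. Assume that for every policy π : S → A the matrix P_π defined by P_π(s, s') = δ(s, π(s), s') is irreducible. Fix t ∈ S. Then there exists a unique pair (g, v) with g ∈ ℝ and v : S → ℝ such that v(t) = 0 and, for every s ∈ S, g + v(s) = min_{a ∈ A} ( r(s, a) + Σ_{s' ∈ S} δ(s, a, s')·v(s') ). -/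
/-!
Each policy `π` has a gain `g` and a bias `v` solving the Poisson equation `g + v = r_π + P_π v`:
by the maximum principle for the irreducible stochastic matrix `P_π`, the kernel of `I - P_π`
consists of the constants and its range misses them. A policy of minimal gain solves the Bellman
system, since otherwise the policy greedy for its bias would have a strictly smaller gain.
If `(g₁, v₁)` and `(g₂, v₂)` both solve it and `π` is greedy for `v₂`, then `w = v₁ - v₂`
satisfies `w + (g₁ - g₂) ≤ P_π w`; at a maximum of `w` this forces `g₁ ≤ g₂`, and once the gains
agree `w` is `P_π`-subharmonic, hence constant.
-/

open Finset Matrix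

namespace Matrix

variable {n : Type*} [Fintype n] {P : Matrix n n ℝ}

lemma add_le_mulVec_sub_of_sub_of_super {ρ v₁ v₂ : n → ℝ} {g₁ g₂ : ℝ}
    (h₁ : ∀ i, g₁ + v₁ i ≤ ρ i + (P *ᵥ v₁) i) (h₂ : ∀ i, ρ i + (P *ᵥ v₂) i ≤ g₂ + v₂ i) (i : n) :
    (v₁ - v₂) i + (g₁ - g₂) ≤ (P *ᵥ (v₁ - v₂)) i := by
  rw [mulVec_sub, Pi.sub_apply, Pi.sub_apply]
  linarith [h₁ i, h₂ i]

variable [DecidableEq n]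

lemma mulVec_apply_le_of_forall_le (hP : P ∈ rowStochastic ℝ n) {w : n → ℝ} {a : ℝ}
    (hw : ∀ j, w j ≤ a) (i : n) : (P *ᵥ w) i ≤ a := by
  have h := nonneg_mulVec_of_mem_rowStochastic hP (x := a • 1 - w) (fun j => by simpa using hw j) i
  rw [mulVec_sub, mulVec_smul, one_vecMul_of_mem_rowStochastic hP] at h
  simpa using h

lemma mulVec_eq_self_of_forall_eq (hP : P ∈ rowStochastic ℝ n) {w : n → ℝ} {i : n}
    (hw : ∀ j, w j = w i) : P *ᵥ w = w := by
  have hw' : w = w i • 1 := funext fun j => by simp [hw j]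
  rw [hw', mulVec_smul, one_vecMul_of_mem_rowStochastic hP]

lemma nonpos_of_forall_add_le_mulVec [Nonempty n] (hP : P ∈ rowStochastic ℝ n) {w : n → ℝ}
    {c : ℝ} (h : ∀ i, w i + c ≤ (P *ᵥ w) i) : c ≤ 0 := by
  obtain ⟨i, -, hi⟩ := exists_max_image univ w univ_nonempty
  linarith [h i, mulVec_apply_le_of_forall_le hP (fun j => hi j (mem_univ j)) i]

lemma eq_of_le_mulVec_of_forall_le (hP : P ∈ rowStochastic ℝ n) {w : n → ℝ} {i j : n}
    (hw : w i ≤ (P *ᵥ w) i) (hmax : ∀ l, w l ≤ w i) (hij : 0 < P i j) : w j = w i := by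
  have hgap : ∀ l, 0 ≤ w i - w l := fun l => sub_nonneg.2 (hmax l)
  have hj : P i j * (w i - w j) ≤ w i - (P *ᵥ w) i := calc
    P i j * (w i - w j) ≤ ∑ l, P i l * (w i - w l) :=
      single_le_sum (f := fun l => P i l * (w i - w l))
        (fun l _ => mul_nonneg (nonneg_of_mem_rowStochastic hP) (hgap l)) (mem_univ j)
    _ = w i - (P *ᵥ w) i := by
      simp only [mul_sub, sum_sub_distrib, ← sum_mul, sum_row_of_mem_rowStochastic hP, one_mul]
      rfl
  linarith [hmax j, nonpos_of_mul_nonpos_right (hj.trans (sub_nonpos.2 hw)) hij]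

lemma IsIrreducible.mem_of_forall_pos_imp {m R : Type*} [Ring R] [LinearOrder R]
    {Q : Matrix m m R} (hQ : Q.IsIrreducible) {M : Set m}
    (hM : ∀ i j, i ∈ M → 0 < Q i j → j ∈ M) {i : m} (hi : i ∈ M) (j : m) : j ∈ M := by
  let := toQuiver Q
  obtain ⟨p, -⟩ := hQ.connected i j
  induction p with
  | nil => exact hi
  | cons _ e ih => exact hM _ _ ih e.down

lemma IsIrreducible.eq_of_le_mulVec (hirr : P.IsIrreducible) (hP : P ∈ rowStochastic ℝ n)
    {w : n → ℝ} (hw : w ≤ P *ᵥ w) (i j : n) : w i = w j := by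
  obtain ⟨k, -, hk⟩ := exists_max_image univ w ⟨i, mem_univ i⟩
  have hmax : ∀ i, w i = w k := by
    refine hirr.mem_of_forall_pos_imp (M := {i | w i = w k}) ?_ rfl
    intro i j (hi : w i = w k) hij
    rw [← hi] at hk ⊢
    exact eq_of_le_mulVec_of_forall_le hP (hw i) (fun l => hk l (mem_univ l)) hij
  rw [hmax i, hmax j]

lemma IsIrreducible.neg_of_forall_add_le_mulVec (hirr : P.IsIrreducible)
    (hP : P ∈ rowStochastic ℝ n) {w : n → ℝ} {c : ℝ} (h : ∀ i, w i + c ≤ (P *ᵥ w) i) {i : n}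
    (hi : w i + c < (P *ᵥ w) i) : c < 0 := by
  have : Nonempty n := ⟨i⟩
  refine (nonpos_of_forall_add_le_mulVec hP h).lt_of_ne ?_
  rintro rfl
  have hconst := hirr.eq_of_le_mulVec hP (fun j => by simpa using h j)
  simp [mulVec_eq_self_of_forall_eq hP (hconst · i)] at hi

theorem IsIrreducible.exists_poisson_solution (hirr : P.IsIrreducible) (hP : P ∈ rowStochastic ℝ n)
    (ρ : n → ℝ) (t : n) : ∃ g v, v t = 0 ∧ ∀ i, g + v i = ρ i + (P *ᵥ v) i := by
  -- `u ↦ u - P u + u t • 1` is injective, hence surjective; a preimage `u` of `ρ` gives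
  -- the gain `u t` and the normalized bias `u - u t • 1`.
  let Φ : (n → ℝ) →ₗ[ℝ] n → ℝ := LinearMap.id - P.mulVecLin + (LinearMap.proj t).smulRight 1
  have hΦ : ∀ u i, Φ u i = u i - (P *ᵥ u) i + u t := fun u i => by simp [Φ]
  have hinj : Function.Injective Φ := by
    refine (injective_iff_map_eq_zero Φ).2 fun u hu => ?_
    have hPu : ∀ i, (P *ᵥ u) i = u i + u t := fun i => by
      have h0 := congrFun hu i
      rw [hΦ, Pi.zero_apply] at h0
      linarith
    have : Nonempty n := ⟨t⟩
    have hle : u t ≤ 0 := nonpos_of_forall_add_le_mulVec hP (fun i => (hPu i).ge)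
    have hge : -u t ≤ 0 := nonpos_of_forall_add_le_mulVec hP (w := -u)
      (fun i => by rw [mulVec_neg, Pi.neg_apply, Pi.neg_apply, hPu]; linarith)
    have hconst := hirr.eq_of_le_mulVec hP (w := u) (fun i => by linarith [hPu i])
    funext i
    rw [hconst i t]
    exact le_antisymm hle (neg_nonpos.1 hge)
  obtain ⟨u, hu⟩ := LinearMap.injective_iff_surjective.1 hinj ρ
  refine ⟨u t, u - u t • 1, by simp, fun i => ?_⟩
  rw [mulVec_sub, mulVec_smul, one_vecMul_of_mem_rowStochastic hP, ← hu, hΦ]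
  simp only [Pi.sub_apply, Pi.smul_apply, Pi.one_apply, smul_eq_mul, mul_one]
  ring

variable {ρ v₁ v₂ : n → ℝ} {g₁ g₂ : ℝ}

lemma gain_le_of_sub_of_super [Nonempty n] (hP : P ∈ rowStochastic ℝ n)
    (h₁ : ∀ i, g₁ + v₁ i ≤ ρ i + (P *ᵥ v₁) i) (h₂ : ∀ i, ρ i + (P *ᵥ v₂) i ≤ g₂ + v₂ i) :
    g₁ ≤ g₂ :=
  sub_nonpos.1 <| nonpos_of_forall_add_le_mulVec hP (add_le_mulVec_sub_of_sub_of_super h₁ h₂)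

lemma IsIrreducible.gain_lt_of_sub_of_super (hirr : P.IsIrreducible) (hP : P ∈ rowStochastic ℝ n)
    (h₁ : ∀ i, g₁ + v₁ i ≤ ρ i + (P *ᵥ v₁) i) (h₂ : ∀ i, ρ i + (P *ᵥ v₂) i ≤ g₂ + v₂ i) {i : n}
    (hi : ρ i + (P *ᵥ v₂) i < g₂ + v₂ i) : g₁ < g₂ := by
  refine sub_neg.1 <| hirr.neg_of_forall_add_le_mulVec hP (add_le_mulVec_sub_of_sub_of_super h₁ h₂)
    (i := i) ?_
  rw [mulVec_sub, Pi.sub_apply, Pi.sub_apply]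
  linarith [h₁ i]

lemma IsIrreducible.sub_eq_sub_of_sub_of_super (hirr : P.IsIrreducible) (hP : P ∈ rowStochastic ℝ n)
    (h₁ : ∀ i, g₁ + v₁ i ≤ ρ i + (P *ᵥ v₁) i) (h₂ : ∀ i, ρ i + (P *ᵥ v₂) i ≤ g₁ + v₂ i)
    (i j : n) : v₁ i - v₂ i = v₁ j - v₂ j :=
  hirr.eq_of_le_mulVec hP (w := v₁ - v₂) (fun k => by
    simpa only [sub_self, add_zero] using add_le_mulVec_sub_of_sub_of_super h₁ h₂ k) i j

end Matrix

section MDP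

variable {S A : Type*} [Fintype S] [Fintype A] [Nonempty A]

def policyMatrix (δ : S → A → S → ℝ) (π : S → A) : Matrix S S ℝ :=
  of fun s s' => δ s (π s) s'

def bellman (δ : S → A → S → ℝ) (r : S → A → ℝ) (v : S → ℝ) (s : S) : ℝ :=
  univ.inf' univ_nonempty fun a => r s a + ∑ s', δ s a s' * v s'

variable {δ : S → A → S → ℝ} {r : S → A → ℝ}

lemma bellman_le (v : S → ℝ) (π : S → A) (s : S) :
    bellman δ r v s ≤ r s (π s) + (policyMatrix δ π *ᵥ v) s :=
  inf'_le (fun a => r s a + ∑ s', δ s a s' * v s') (mem_univ (π s))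

lemma exists_greedy_policy (v : S → ℝ) :
    ∃ π : S → A, ∀ s, bellman δ r v s = r s (π s) + (policyMatrix δ π *ᵥ v) s := by
  choose π _ hπ using fun s => exists_mem_eq_inf' univ_nonempty
    (fun a => r s a + ∑ s', δ s a s' * v s')
  exact ⟨π, hπ⟩

theorem exists_bellman_solution [DecidableEq S] (hδ : ∀ π, policyMatrix δ π ∈ rowStochastic ℝ S)
    (hirr : ∀ π, (policyMatrix δ π).IsIrreducible) (t : S) :
    ∃ g v, v t = 0 ∧ ∀ s, g + v s = bellman δ r v s := by
  choose gain bias hbias_t hbias using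
    fun π : S → A => (hirr π).exists_poisson_solution (hδ π) (fun s => r s (π s)) t
  obtain ⟨π₀, -, hπ₀⟩ := exists_min_image univ gain univ_nonempty
  have hsuper : ∀ s, bellman δ r (bias π₀) s ≤ gain π₀ + bias π₀ s :=
    fun s => (bellman_le _ π₀ s).trans_eq (hbias π₀ s).symm
  refine ⟨gain π₀, bias π₀, hbias_t π₀, fun s => (hsuper s).antisymm' ?_⟩
  by_contra! hs
  obtain ⟨π₁, hπ₁⟩ := exists_greedy_policy (δ := δ) (r := r) (bias π₀)
  have hlt : gain π₁ < gain π₀ := (hirr π₁).gain_lt_of_sub_of_super (hδ π₁)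
    (fun s => (hbias π₁ s).le) (fun s => (hπ₁ s).symm.trans_le (hsuper s))
    ((hπ₁ s).symm.trans_lt hs)
  exact hlt.not_ge (hπ₀ π₁ (mem_univ _))

lemma gain_le_of_bellman [Nonempty S] [DecidableEq S]
    (hδ : ∀ π, policyMatrix δ π ∈ rowStochastic ℝ S) {g₁ g₂ : ℝ} {v₁ v₂ : S → ℝ}
    (h₁ : ∀ s, g₁ + v₁ s = bellman δ r v₁ s) (h₂ : ∀ s, g₂ + v₂ s = bellman δ r v₂ s) :
    g₁ ≤ g₂ := by
  obtain ⟨π, hπ⟩ := exists_greedy_policy (δ := δ) (r := r) v₂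
  exact gain_le_of_sub_of_super (hδ π) (fun s => (h₁ s).trans_le (bellman_le v₁ π s))
    (fun s => ((hπ s).symm.trans (h₂ s).symm).le)

lemma sub_eq_sub_of_bellman [DecidableEq S] (hδ : ∀ π, policyMatrix δ π ∈ rowStochastic ℝ S)
    (hirr : ∀ π, (policyMatrix δ π).IsIrreducible) {g : ℝ} {v₁ v₂ : S → ℝ}
    (h₁ : ∀ s, g + v₁ s = bellman δ r v₁ s) (h₂ : ∀ s, g + v₂ s = bellman δ r v₂ s)
    (s s' : S) : v₁ s - v₂ s = v₁ s' - v₂ s' := by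
  obtain ⟨π, hπ⟩ := exists_greedy_policy (δ := δ) (r := r) v₂
  exact (hirr π).sub_eq_sub_of_sub_of_super (hδ π)
    (fun s => (h₁ s).trans_le (bellman_le v₁ π s)) (fun s => ((hπ s).symm.trans (h₂ s).symm).le)
    s s'

end MDP

/-- Bellman optimality system for an ergodic finite MDP: if every deterministic
stationary policy `π` induces an irreducible chain, then for any distinguished state
`t` there is a unique pair `(g, v)` with `v t = 0` satisfying
`g + v s = min_{a} ( r s a + Σ_{s'} δ s a s' · v s' )` for all `s`. -/
theorem stmt9 {S A : Type*} [Fintype S] [Nonempty S] [DecidableEq S]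
    [Fintype A] [Nonempty A]
    (δ : S → A → S → ℝ)
    (hnonneg : ∀ (s : S) (a : A) (s' : S), 0 ≤ δ s a s')
    (hrow : ∀ (s : S) (a : A), ∑ s' : S, δ s a s' = 1)
    (hirr : ∀ π : S → A, ∀ s s' : S,
      ∃ k : ℕ, 1 ≤ k ∧ 0 < ((Matrix.of fun u u' => δ u (π u) u') ^ k) s s')
    (r : S → A → ℝ) (t : S) :
    ∃! p : ℝ × (S → ℝ),
      p.2 t = 0 ∧ ∀ s : S,
        p.1 + p.2 s =
          Finset.univ.inf' Finset.univ_nonempty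
            (fun a : A => r s a + ∑ s' : S, δ s a s' * p.2 s') := by
  have hδ : ∀ π, policyMatrix δ π ∈ rowStochastic ℝ S := fun π =>
    mem_rowStochastic_iff_sum.2 ⟨fun s s' => hnonneg s (π s) s', fun s => hrow s (π s)⟩
  have hirr' : ∀ π, (policyMatrix δ π).IsIrreducible := fun π =>
    (isIrreducible_iff_exists_pow_pos (hδ π).1).2 (hirr π)
  obtain ⟨g, v, hvt, hv⟩ := exists_bellman_solution (r := r) hδ hirr' t
  refine ⟨(g, v), ⟨hvt, hv⟩, ?_⟩
  rintro ⟨g', v'⟩ ⟨hv't, hv'⟩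
  obtain rfl : g' = g := (gain_le_of_bellman hδ hv' hv).antisymm (gain_le_of_bellman hδ hv hv')
  refine Prod.ext rfl (funext fun s => ?_)
  linarith [sub_eq_sub_of_bellman hδ hirr' hv' hv s t]
end
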